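/- arXiv:1501.07746 — 2 statements merged into one kernel-verified Lean document; each statement's English description precedes it below -/
import Mathlib

section
/- Let g be a weight function on ℝ^d, let m be a weight for g with m ≥ 1, and let a : ℝ^d → ℝ be a smooth function with a ∈ S(m,g) and a(x) ≥ m(x) for all x. Then for every multiindex α ≠ 0 there is a constant c_α, independent of z, such that for every z ∈ ℂ with Re z ≥ 0 and every x, |∂^α (1/(a+z))(x)| ≤ c_α (m(x)/(|z| + m(x))²) g(x)^{-|α|}; moreover there is c > 0, independent of z, with |1/(a(x)+z)| ≤ c (|z| + m(x))^{-1} for all x and all z with Re z ≥ 0. -/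
open MeasureTheory Complex Topology Filter
open scoped RealInnerProductSpace ENNReal

noncomputable section

/-- `ℝ^d` as a Euclidean space. -/
abbrev E (d : ℕ) := EuclideanSpace ℝ (Fin d)

/-- A weight function on `ℝ^d`: continuous, `g ≥ 1`, and self-tempered. -/
def IsWeightFn {d : ℕ} (g : E d → ℝ) : Prop :=
  Continuous g ∧ (∀ x, 1 ≤ g x) ∧
  ∃ C M : ℝ, 0 < C ∧ 0 < M ∧ ∀ x y : E d,
    g x / g y ≤ C * (1 + ‖x - y‖ / g x) ^ M ∧
    g y / g x ≤ C * (1 + ‖x - y‖ / g x) ^ M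

/-- A weight `m` for a weight function `g`. -/
def IsWeight {d : ℕ} (g m : E d → ℝ) : Prop :=
  (∀ x, 0 < m x) ∧
  ∃ C M : ℝ, 0 < C ∧ 0 < M ∧ ∀ x y : E d,
    m x / m y ≤ C * (1 + ‖x - y‖ / g x) ^ M ∧
    m y / m x ≤ C * (1 + ‖x - y‖ / g x) ^ M

lemma aux_ne {l : ℝ} (hl : 0 < l) {z : ℂ} (hz : 0 ≤ z.re) {u : ℝ} (hu : 0 < u) :
    ((l : ℂ) * u + z) ≠ 0 := by
  intro h
  have h2 : ((l : ℂ) * u + z).re = 0 := by rw [h]; simp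
  simp only [Complex.add_re, Complex.mul_re, Complex.ofReal_re, Complex.ofReal_im] at h2
  nlinarith [mul_pos hl hu]

lemma aux_ne' {r : ℝ} (hr : 0 < r) {z : ℂ} (hz : 0 ≤ z.re) : ((r : ℂ) + z) ≠ 0 := by
  intro h
  have h2 : ((r : ℂ) + z).re = 0 := by rw [h]; simp
  simp only [Complex.add_re, Complex.ofReal_re] at h2
  linarith

lemma aux_abs {r : ℝ} (hr : 0 ≤ r) {z : ℂ} (hz : 0 ≤ z.re) :
    r ≤ ‖(r : ℂ) + z‖ := by
  have h := Complex.re_le_norm ((r : ℂ) + z)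
  simp only [Complex.add_re, Complex.ofReal_re] at h
  linarith

lemma aux_iter (l : ℝ) (hl : 0 < l) (z : ℂ) (hz : 0 ≤ z.re) (i : ℕ) :
    ∀ u ∈ Set.Ioi (0:ℝ),
      iteratedDerivWithin i (fun t : ℝ => ((l : ℂ) * t + z)⁻¹) (Set.Ioi 0) u
        = (-(l : ℂ)) ^ i * (Nat.factorial i) * ((l : ℂ) * u + z) ^ (-(i : ℤ) - 1) := by
  induction i with
  | zero =>
    intro u hu
    simp [zpow_neg]
  | succ i ih =>
    intro u hu
    have hud : UniqueDiffWithinAt ℝ (Set.Ioi (0:ℝ)) u := (uniqueDiffOn_Ioi 0) u hu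
    rw [iteratedDerivWithin_succ]
    have heq : derivWithin
        (iteratedDerivWithin i (fun t : ℝ => ((l : ℂ) * t + z)⁻¹) (Set.Ioi 0)) (Set.Ioi 0) u
        = derivWithin
            (fun v : ℝ => (-(l : ℂ)) ^ i * (Nat.factorial i) * ((l : ℂ) * v + z) ^ (-(i : ℤ) - 1))
            (Set.Ioi 0) u :=
      derivWithin_congr ih (ih u hu)
    rw [heq]
    have hw : HasDerivAt (fun v : ℝ => (l : ℂ) * v + z) ((l : ℂ)) u := by
      simpa using ((Complex.ofRealCLM.hasDerivAt (x := u)).const_mul (l : ℂ)).add_const z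
    have hne : ((l : ℂ) * u + z) ≠ 0 := aux_ne hl hz hu
    have hzp : HasDerivAt (fun w : ℂ => w ^ (-(i : ℤ) - 1))
        (((-(i : ℤ) - 1 : ℤ) : ℂ) * ((l : ℂ) * u + z) ^ (-(i : ℤ) - 2)) ((l : ℂ) * u + z) := by
      have := hasDerivAt_zpow (-(i : ℤ) - 1) ((l : ℂ) * u + z) (Or.inl hne)
      have he : (-(i : ℤ) - 1 - 1) = (-(i : ℤ) - 2) := by ring
      rwa [he] at this
    have hcomp : HasDerivAt (fun v : ℝ => ((l : ℂ) * v + z) ^ (-(i : ℤ) - 1))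
        ((l : ℂ) • (((-(i : ℤ) - 1 : ℤ) : ℂ) * ((l : ℂ) * u + z) ^ (-(i : ℤ) - 2))) u := by
      have := hzp.scomp u hw
      exact this
    have hmul := hcomp.const_mul ((-(l : ℂ)) ^ i * (Nat.factorial i))
    rw [hmul.hasDerivWithinAt.derivWithin hud]
    rw [show (-((i + 1 : ℕ) : ℤ) - 1) = (-(i : ℤ) - 2) by push_cast; ring]
    rw [smul_eq_mul]
    push_cast [Nat.factorial_succ, pow_succ]
    ring

lemma aux_bound {l A Z : ℝ} (hl : 1 ≤ l) (hA : 0 < A) (hlA : l ≤ A) (hZ : 0 ≤ Z)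
    (h3 : Z + l ≤ 3 * A) {i k : ℕ} (h1 : 1 ≤ i) (hik : i ≤ k) :
    (Nat.factorial i : ℝ) * l ^ i * (A ^ (i + 1))⁻¹
      ≤ (Nat.factorial k : ℝ) * (9 * l / (Z + l) ^ 2) := by
  have hl0 : (0:ℝ) < l := lt_of_lt_of_le one_pos hl
  have e1 : l ^ i ≤ l * A ^ (i - 1) := by
    calc l ^ i = l * l ^ (i - 1) := by
          rw [← pow_succ']; congr 1; omega
      _ ≤ l * A ^ (i - 1) := by gcongr
  have e2 : A ^ (i + 1) = A ^ (i - 1) * A ^ 2 := by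
    rw [← pow_add]; congr 1; omega
  have key : l ^ i * (A ^ (i + 1))⁻¹ ≤ l / A ^ 2 := by
    rw [e2, mul_inv]
    calc l ^ i * ((A ^ (i - 1))⁻¹ * (A ^ 2)⁻¹)
        ≤ (l * A ^ (i - 1)) * ((A ^ (i - 1))⁻¹ * (A ^ 2)⁻¹) := by gcongr
      _ = l / A ^ 2 := by field_simp
  have key2 : l / A ^ 2 ≤ 9 * l / (Z + l) ^ 2 := by
    rw [div_le_div_iff₀ (by positivity) (by positivity)]
    calc l * (Z + l) ^ 2 ≤ l * (3 * A) ^ 2 := by gcongr <;> linarith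
      _ = 9 * l * A ^ 2 := by ring
  have fle : (Nat.factorial i : ℝ) ≤ (Nat.factorial k : ℝ) :=
    Nat.cast_le.mpr (Nat.factorial_le hik)
  calc (Nat.factorial i : ℝ) * l ^ i * (A ^ (i + 1))⁻¹
      = (Nat.factorial i : ℝ) * (l ^ i * (A ^ (i + 1))⁻¹) := by ring
    _ ≤ (Nat.factorial k : ℝ) * (9 * l / (Z + l) ^ 2) :=
        mul_le_mul fle (key.trans key2) (by positivity) (by positivity)

/-- If `a ∈ S(m,g)` is real valued with `a ≥ m ≥ 1`, then for `Re z ≥ 0` the symbol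
`1/(a+z)` satisfies `|∂^α (1/(a+z))| ≤ c_α (m/(|z|+m)²) g^{-|α|}` for `α ≠ 0` and
`|1/(a+z)| ≤ c (|z|+m)^{-1}`, with constants independent of `z`. -/
theorem statement1 (d : ℕ) (g m : E d → ℝ)
    (hg : IsWeightFn g) (hm : IsWeight g m) (hm1 : ∀ x, 1 ≤ m x)
    (a : E d → ℝ) (ha_smooth : ContDiff ℝ (⊤ : ℕ∞) a)
    (ha : ∀ k : ℕ, ∃ c : ℝ, 0 < c ∧ ∀ x,
      ‖iteratedFDeriv ℝ k a x‖ ≤ c * m x * g x ^ (-(k : ℝ)))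
    (ha_low : ∀ x, m x ≤ a x) :
    (∀ k : ℕ, k ≠ 0 → ∃ c : ℝ, 0 < c ∧ ∀ z : ℂ, 0 ≤ z.re → ∀ x,
      ‖iteratedFDeriv ℝ k (fun y => ((a y : ℂ) + z)⁻¹) x‖ ≤
        c * (m x / (‖z‖ + m x) ^ 2) * g x ^ (-(k : ℝ))) ∧
    (∃ c : ℝ, 0 < c ∧ ∀ z : ℂ, 0 ≤ z.re → ∀ x,
      ‖((a x : ℂ) + z)⁻¹‖ ≤ c * (‖z‖ + m x)⁻¹) := by
  constructor
  · -- main estimate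
    intro k hk
    have hk1 : 1 ≤ k := Nat.one_le_iff_ne_zero.mpr hk
    choose c0 hc0pos hc0 using ha
    set S : ℝ := 1 + ∑ i ∈ Finset.range (k + 1), c0 i with hSdef
    have hsum0 : 0 ≤ ∑ i ∈ Finset.range (k + 1), c0 i :=
      Finset.sum_nonneg fun i _ => (hc0pos i).le
    have hS1 : 1 ≤ S := by simp only [hSdef]; linarith
    have hS0 : 0 < S := lt_of_lt_of_le one_pos hS1
    have hSle : ∀ i, i ≤ k → c0 i ≤ S := by
      intro i hi
      have := Finset.single_le_sum (f := c0) (fun j _ => (hc0pos j).le)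
        (Finset.mem_range.mpr (Nat.lt_succ_of_le hi))
      simp only [hSdef]; linarith
    refine ⟨9 * (Nat.factorial k : ℝ) * (Nat.factorial k : ℝ) * S ^ k, by positivity, ?_⟩
    intro z hz x
    set l : ℝ := m x with hldef
    have hl0 : 0 < l := hm.1 x
    have hl1 : 1 ≤ l := hm1 x
    have haxl : l ≤ a x := ha_low x
    have hax0 : 0 < a x := lt_of_lt_of_le hl0 haxl
    have hgx1 : 1 ≤ g x := hg.2.1 x
    have hgx0 : 0 < g x := lt_of_lt_of_le one_pos hgx1
    set f : E d → ℝ := fun y => l⁻¹ • a y with hfdef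
    set C0 : ℂ := ((a x : ℂ) + z)⁻¹ with hC0def
    set G1 : ℝ → ℂ := fun u => -C0 + ((l : ℂ) * u + z)⁻¹ with hG1def
    -- basic identities
    have hfx' : ∀ y, l * f y = a y := by
      intro y; simp only [hfdef, smul_eq_mul]; field_simp
    have hfpos : ∀ y, 0 < f y := by
      intro y
      have := lt_of_lt_of_le (hm.1 y) (ha_low y)
      have := hfx' y
      nlinarith [inv_pos.mpr hl0]
    have hfxc : ∀ y, (l : ℂ) * (f y : ℝ) + z = ((a y : ℂ) + z) := by
      intro y; rw [← Complex.ofReal_mul, hfx' y]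
    -- smoothness
    have hasm : ContDiff ℝ (k : WithTop ℕ∞) a := ha_smooth.of_le (by exact_mod_cast le_top)
    have hfsm : ContDiff ℝ (k : WithTop ℕ∞) f := hasm.const_smul l⁻¹
    have hwsm : ContDiff ℝ (k : WithTop ℕ∞) (fun u : ℝ => (l : ℂ) * u + z) :=
      (contDiff_const.mul Complex.ofRealCLM.contDiff).add contDiff_const
    have hG1sm : ContDiffOn ℝ (k : WithTop ℕ∞) G1 (Set.Ioi 0) :=
      contDiffOn_const.add (hwsm.contDiffOn.inv fun u hu => aux_ne hl0 hz hu)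
    have hFsm : ContDiff ℝ (k : WithTop ℕ∞) (fun y => ((a y : ℂ) + z)⁻¹) := by
      refine ContDiff.inv ?_ fun y => aux_ne' (lt_of_lt_of_le (hm.1 y) (ha_low y)) hz
      exact (Complex.ofRealCLM.contDiff.comp hasm).add contDiff_const
    have hGeq : G1 ∘ f = fun y => -C0 + ((a y : ℂ) + z)⁻¹ := by
      funext y; simp only [Function.comp, hG1def, hfxc y]
    have hGsm : ContDiff ℝ (k : WithTop ℕ∞) (G1 ∘ f) := by
      rw [hGeq]; exact contDiff_const.add hFsm
    -- abs lower bounds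
    set A : ℝ := ‖(a x : ℂ) + z‖ with hAdef
    have hA1 : a x ≤ A := aux_abs hax0.le hz
    have hA0 : 0 < A := lt_of_lt_of_le hax0 hA1
    have hzA : ‖z‖ + l ≤ 3 * A := by
      have h2 : ‖z‖ ≤ A + a x := by
        have := norm_add_le ((a x : ℂ) + z) (-(a x : ℂ))
        simpa [hAdef, abs_of_pos hax0] using this
      linarith
    -- constants
    set C : ℝ := (Nat.factorial k : ℝ) * (9 * l / (‖z‖ + l) ^ 2) with hCdef
    set D : ℝ := S / g x with hDdef
    -- bound on derivatives of G1 at f x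
    have hfxt : f x ∈ Set.Ioi (0 : ℝ) := hfpos x
    have hC : ∀ i, i ≤ k → ‖iteratedFDerivWithin ℝ i G1 (Set.Ioi 0) (f x)‖ ≤ C := by
      intro i hi
      rw [norm_iteratedFDerivWithin_eq_norm_iteratedDerivWithin]
      rcases Nat.eq_zero_or_pos i with rfl | hipos
      · have : G1 (f x) = 0 := by
          simp only [hG1def, hfxc x, hC0def]; ring
        rw [iteratedDerivWithin_zero, this]
        simp only [norm_zero]
        positivity
      · have hrw : iteratedDerivWithin i G1 (Set.Ioi 0) (f x)
            = iteratedDerivWithin i (fun t : ℝ => ((l : ℂ) * t + z)⁻¹) (Set.Ioi 0) (f x) := by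
          exact iteratedDerivWithin_const_add hipos (-C0)
        rw [hrw, aux_iter l hl0 z hz i (f x) hfxt, hfxc x]
        rw [show (-(i : ℤ) - 1) = -(((i + 1 : ℕ) : ℤ)) by push_cast; ring]
        rw [zpow_neg, zpow_natCast]
        rw [norm_mul, norm_mul, norm_pow, norm_inv, norm_pow]
        simp only [norm_neg, Real.norm_eq_abs, Complex.norm_real, Complex.norm_natCast,
          abs_of_pos hl0, Nat.abs_cast, ← hAdef]
        calc l ^ i * (Nat.factorial i : ℝ) * (A ^ (i + 1))⁻¹
            = (Nat.factorial i : ℝ) * l ^ i * (A ^ (i + 1))⁻¹ := by ring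
          _ ≤ C := by
              rw [hCdef]
              exact aux_bound hl1 hA0 (le_trans haxl hA1) (norm_nonneg z) hzA hipos hi
    -- bound on derivatives of f
    have hD : ∀ i, 1 ≤ i → i ≤ k → ‖iteratedFDerivWithin ℝ i f Set.univ x‖ ≤ D ^ i := by
      intro i hi1 hik
      rw [iteratedFDerivWithin_univ]
      have hsmul : iteratedFDeriv ℝ i f x = l⁻¹ • iteratedFDeriv ℝ i a x := by
        have hfa : f = l⁻¹ • a := rfl
        rw [hfa]
        exact iteratedFDeriv_const_smul_apply (ha_smooth.of_le (by exact_mod_cast le_top)).contDiffAt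
      rw [hsmul, norm_smul, Real.norm_eq_abs, abs_of_pos (inv_pos.mpr hl0)]
      have hrpow : g x ^ (-(i : ℝ)) = ((g x) ^ i)⁻¹ := by
        rw [← Real.rpow_natCast (g x) i, ← Real.rpow_neg hgx0.le]
      have h1 : l⁻¹ * ‖iteratedFDeriv ℝ i a x‖ ≤ l⁻¹ * (c0 i * l * ((g x) ^ i)⁻¹) := by
        have := hc0 i x
        rw [hrpow] at this
        gcongr
      have h2 : l⁻¹ * (c0 i * l * ((g x) ^ i)⁻¹) = c0 i * ((g x) ^ i)⁻¹ := by
        field_simp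
      have h3 : c0 i * ((g x) ^ i)⁻¹ ≤ S ^ i * ((g x) ^ i)⁻¹ := by
        gcongr
        exact (hSle i hik).trans (le_self_pow₀ hS1 (by omega))
      have h4 : S ^ i * ((g x) ^ i)⁻¹ = D ^ i := by
        rw [hDdef, div_pow, div_eq_mul_inv]
      calc l⁻¹ * ‖iteratedFDeriv ℝ i a x‖
          ≤ l⁻¹ * (c0 i * l * ((g x) ^ i)⁻¹) := h1
        _ = c0 i * ((g x) ^ i)⁻¹ := h2
        _ ≤ S ^ i * ((g x) ^ i)⁻¹ := h3
        _ = D ^ i := h4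
    -- apply composition bound
    have hmaps : Set.MapsTo f Set.univ (Set.Ioi (0 : ℝ)) := fun y _ => hfpos y
    have hcomp := norm_iteratedFDerivWithin_comp_le (𝕜 := ℝ) hG1sm hfsm.contDiffOn
      (le_refl (k : WithTop ℕ∞)) (uniqueDiffOn_Ioi 0) uniqueDiffOn_univ hmaps
      (Set.mem_univ x) hC hD
    -- put everything together
    have hFeq : (fun y => ((a y : ℂ) + z)⁻¹) = (fun _ : E d => C0) + (G1 ∘ f) := by
      funext y
      simp only [Pi.add_apply, hGeq]
      ring
    have hrpowk : g x ^ (-(k : ℝ)) = ((g x) ^ k)⁻¹ := by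
      rw [← Real.rpow_natCast (g x) k, ← Real.rpow_neg hgx0.le]
    calc ‖iteratedFDeriv ℝ k (fun y => ((a y : ℂ) + z)⁻¹) x‖
        = ‖iteratedFDeriv ℝ k ((fun _ : E d => C0) + (G1 ∘ f)) x‖ := by rw [hFeq]
      _ = ‖iteratedFDeriv ℝ k (fun _ : E d => C0) x + iteratedFDeriv ℝ k (G1 ∘ f) x‖ := by
          rw [iteratedFDeriv_add_apply contDiff_const.contDiffAt hGsm.contDiffAt]
      _ = ‖iteratedFDerivWithin ℝ k (G1 ∘ f) Set.univ x‖ := by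
          rw [iteratedFDeriv_const_of_ne hk, iteratedFDerivWithin_univ]
          simp only [Pi.zero_apply, zero_add]
      _ ≤ (Nat.factorial k : ℝ) * C * D ^ k := hcomp
      _ = 9 * (Nat.factorial k : ℝ) * (Nat.factorial k : ℝ) * S ^ k *
            (l / (‖z‖ + l) ^ 2) * g x ^ (-(k : ℝ)) := by
          have hzl0 : (0:ℝ) < ‖z‖ + l := by
            have := norm_nonneg z; linarith
          rw [hCdef, hDdef, hrpowk, div_pow]
          field_simp
  · -- easy resolvent bound
    refine ⟨3, by norm_num, ?_⟩
    intro z hz x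
    have hl0 : 0 < m x := hm.1 x
    have hax0 : 0 < a x := lt_of_lt_of_le hl0 (ha_low x)
    set A : ℝ := ‖(a x : ℂ) + z‖ with hAdef
    have hA1 : a x ≤ A := aux_abs hax0.le hz
    have hA0 : 0 < A := lt_of_lt_of_le hax0 hA1
    have hzA : ‖z‖ + m x ≤ 3 * A := by
      have h2 : ‖z‖ ≤ A + a x := by
        have := norm_add_le ((a x : ℂ) + z) (-(a x : ℂ))
        simpa [hAdef, abs_of_pos hax0] using this
      have := ha_low x
      linarith
    have hzm0 : 0 < ‖z‖ + m x := by
      have := norm_nonneg z; linarith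
    rw [norm_inv, ← hAdef]
    calc A⁻¹ ≤ ((‖z‖ + m x) / 3)⁻¹ := by
          apply inv_anti₀ (by positivity)
          linarith
      _ = 3 * (‖z‖ + m x)⁻¹ := by
          rw [inv_div, div_eq_mul_inv]
end
end

section
/- Fix k ∈ ℕ and φ₀ ∈ (π/2, π). There exists a constant C' = C'(k, φ₀) with the following property: for all t > 0, a > 0, C > 0, and every continuous function H on the set Γ_t = {r e^{iφ₀} : r ≥ 1/t} ∪ {r e^{-iφ₀} : r ≥ 1/t} ∪ {t^{-1}e^{iφ} : −φ₀ ≤ φ ≤ φ₀} satisfying |H(z)| ≤ C(a + |z|)^{-k-1} on Γ_t, the contour integral ∫_{Γ_t} e^{zt} H(z) dz — defined as −∫_{1/t}^∞ e^{t r e^{-iφ₀}} H(r e^{-iφ₀}) e^{-iφ₀} dr + ∫_{−φ₀}^{φ₀} e^{t t^{-1}e^{iφ}} H(t^{-1}e^{iφ}) i t^{-1} e^{iφ} dφ + ∫_{1/t}^∞ e^{t r e^{iφ₀}} H(r e^{iφ₀}) e^{iφ₀} dr — satisfies |∫_{Γ_t} e^{zt} H(z) dz| ≤ C' C t^k (1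 + a t)^{-k-1}. -/
open MeasureTheory Complex Topology Filter
open scoped Real ENNReal

noncomputable section

/-- The contour `Γ_t`: rays of argument `±φ₀` from modulus `1/t` to infinity,
joined by the arc of radius `1/t`. -/
def contourSet (t φ₀ : ℝ) : Set ℂ :=
  {z | ∃ r : ℝ, 1 / t ≤ r ∧ z = (r : ℂ) * Complex.exp (Complex.I * (φ₀ : ℂ))} ∪
  {z | ∃ r : ℝ, 1 / t ≤ r ∧ z = (r : ℂ) * Complex.exp (-Complex.I * (φ₀ : ℂ))} ∪
  {z | ∃ φ : ℝ, -φ₀ ≤ φ ∧ φ ≤ φ₀ ∧ z = ((1 / t : ℝ) : ℂ) * Complex.exp (Complex.I * (φ : ℂ))}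

/-- The contour integral `∫_{Γ_t} e^{zt} H(z) dz` with the indicated parametrization. -/
def contourInt (t φ₀ : ℝ) (H : ℂ → ℂ) : ℂ :=
  -(∫ r in Set.Ici (1 / t),
      Complex.exp ((t : ℂ) * ((r : ℂ) * Complex.exp (-Complex.I * (φ₀ : ℂ)))) *
        H ((r : ℂ) * Complex.exp (-Complex.I * (φ₀ : ℂ))) *
        Complex.exp (-Complex.I * (φ₀ : ℂ))) +
  (∫ φ in -φ₀..φ₀,
      Complex.exp ((t : ℂ) * (((1 / t : ℝ) : ℂ) * Complex.exp (Complex.I * (φ : ℂ)))) *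
        H (((1 / t : ℝ) : ℂ) * Complex.exp (Complex.I * (φ : ℂ))) *
        (Complex.I * ((1 / t : ℝ) : ℂ) * Complex.exp (Complex.I * (φ : ℂ)))) +
  (∫ r in Set.Ici (1 / t),
      Complex.exp ((t : ℂ) * ((r : ℂ) * Complex.exp (Complex.I * (φ₀ : ℂ)))) *
        H ((r : ℂ) * Complex.exp (Complex.I * (φ₀ : ℂ))) *
        Complex.exp (Complex.I * (φ₀ : ℂ)))

/-! On `Γ_t` every point has modulus at least `1/t`, so `‖H‖ ≤ M := C (a + 1/t)^{-k-1}` on the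
whole contour. Since `Re e^{±iφ₀} = cos φ₀ < 0`, the factor `e^{zt}` decays like `e^{t r cos φ₀}`
along each ray, which therefore contributes at most `M / (t |cos φ₀|)`; on the arc `|e^{zt}| ≤ e`
and the arc has length `2φ₀/t`. Altogether `‖∫_{Γ_t}‖ ≤ C' M / t`, and
`(a + 1/t)^{-k-1} / t = t^k (1 + a t)^{-k-1}`. -/

theorem norm_ofReal_mul_exp_mul_I {r : ℝ} (hr : 0 ≤ r) (θ : ℝ) :
    ‖(r : ℂ) * cexp (I * θ)‖ = r := by
  rw [norm_mul, norm_exp_I_mul_ofReal, norm_real, Real.norm_of_nonneg hr, mul_one]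

theorem norm_integral_Ici_exp_mul_le {w : ℂ} (hw : w.re < 0) {r₀ M : ℝ} {g : ℝ → ℂ}
    (hg : ∀ r, r₀ ≤ r → ‖g r‖ ≤ M) :
    ‖∫ r in Set.Ici r₀, cexp (r * w) * g r‖ ≤ M * Real.exp (w.re * r₀) / -w.re := by
  have hbound : ∀ r ∈ Set.Ioi r₀, ‖cexp (r * w) * g r‖ ≤ M * Real.exp (w.re * r) := by
    intro r hr
    rw [norm_mul, Complex.norm_exp, re_ofReal_mul, mul_comm M, mul_comm r]
    exact mul_le_mul_of_nonneg_left (hg r (le_of_lt hr)) (Real.exp_pos _).le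
  calc ‖∫ r in Set.Ici r₀, cexp (r * w) * g r‖
      ≤ ∫ r in Set.Ioi r₀, M * Real.exp (w.re * r) := by
        rw [integral_Ici_eq_integral_Ioi]
        exact norm_integral_le_of_norm_le ((integrableOn_exp_mul_Ioi hw r₀).const_mul M)
          (ae_restrict_of_forall_mem measurableSet_Ioi hbound)
    _ = M * Real.exp (w.re * r₀) / -w.re := by
        rw [integral_const_mul, integral_exp_mul_Ioi hw]; ring

theorem norm_integral_exp_arc_le {t ρ α β M : ℝ} (ht : 0 ≤ t) (hρ : 0 ≤ ρ) {g : ℝ → ℂ}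
    (hg : ∀ φ ∈ Set.uIoc α β, ‖g φ‖ ≤ M) :
    ‖∫ φ in α..β, cexp (t * (ρ * cexp (I * φ))) * g φ * (I * ρ * cexp (I * φ))‖ ≤
      Real.exp (t * ρ) * M * ρ * |β - α| := by
  refine intervalIntegral.norm_integral_le_of_norm_le_const fun φ hφ => ?_
  have hunit : ‖cexp (I * φ)‖ = 1 := norm_exp_I_mul_ofReal φ
  have hexp : ‖cexp (t * (ρ * cexp (I * φ)))‖ ≤ Real.exp (t * ρ) := by
    refine (norm_exp_le_exp_norm _).trans (le_of_eq ?_)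
    rw [norm_mul, norm_ofReal_mul_exp_mul_I hρ, norm_real, Real.norm_of_nonneg ht]
  rw [norm_mul, norm_mul, norm_mul, norm_mul, hunit, norm_I, norm_real, Real.norm_of_nonneg hρ,
    one_mul, mul_one]
  have hM : 0 ≤ M := (norm_nonneg _).trans (hg φ hφ)
  gcongr
  exact hg φ hφ

theorem one_div_le_norm_of_mem_contourSet {t φ₀ : ℝ} (ht : 0 < t) {z : ℂ}
    (hz : z ∈ contourSet t φ₀) : 1 / t ≤ ‖z‖ := by
  have h1t : 0 < 1 / t := by positivity
  rcases hz with (⟨r, hr, rfl⟩ | ⟨r, hr, rfl⟩) | ⟨φ, -, -, rfl⟩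
  · rwa [norm_ofReal_mul_exp_mul_I (h1t.le.trans hr)]
  · rwa [neg_mul, ← mul_neg, ← ofReal_neg, norm_ofReal_mul_exp_mul_I (h1t.le.trans hr)]
  · rw [norm_ofReal_mul_exp_mul_I h1t.le]

theorem norm_integral_ray_le {t M : ℝ} (ht : 0 < t) {e : ℂ} (he : ‖e‖ = 1) (hre : e.re < 0)
    {H : ℂ → ℂ} (hH : ∀ r : ℝ, 1 / t ≤ r → ‖H (r * e)‖ ≤ M) :
    ‖∫ r in Set.Ici (1 / t), cexp (t * (r * e)) * H (r * e) * e‖ ≤ M / (t * -e.re) := by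
  have hM : 0 ≤ M := (norm_nonneg _).trans (hH _ le_rfl)
  have hre' : ((t : ℂ) * e).re = t * e.re := re_ofReal_mul t e
  have hexp : Real.exp (t * e.re * (1 / t)) ≤ 1 := by
    rw [show t * e.re * (1 / t) = e.re by field_simp]
    exact Real.exp_le_one_iff.2 hre.le
  calc _ = ‖∫ r in Set.Ici (1 / t), cexp (r * (t * e)) * (H (r * e) * e)‖ := by
        congr 2; funext r; ring_nf
    _ ≤ M * Real.exp ((t * e).re * (1 / t)) / -(t * e).re :=
        norm_integral_Ici_exp_mul_le (by rw [hre']; nlinarith)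
          fun r hr => by rw [norm_mul, he, mul_one]; exact hH r hr
    _ ≤ M / (t * -e.re) := by
        rw [hre', ← mul_neg]
        exact div_le_div_of_nonneg_right (mul_le_of_le_one_right hM hexp)
          (mul_pos ht (neg_pos.2 hre)).le

theorem norm_contourInt_le {t φ₀ M : ℝ} (ht : 0 < t) (hφ₀ : 0 ≤ φ₀) (hcos : Real.cos φ₀ < 0)
    {H : ℂ → ℂ} (hH : ∀ z ∈ contourSet t φ₀, ‖H z‖ ≤ M) :
    ‖contourInt t φ₀ H‖ ≤ M / t * (2 / -Real.cos φ₀ + 2 * φ₀ * Real.exp 1) := by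
  have h1t : 0 < 1 / t := by positivity
  have hneg : -I * (φ₀ : ℂ) = I * ((-φ₀ : ℝ) : ℂ) := by push_cast; ring
  have hre_upper : (cexp (I * φ₀)).re = Real.cos φ₀ := by rw [mul_comm, exp_ofReal_mul_I_re]
  have hre_lower : (cexp (-I * φ₀)).re = Real.cos φ₀ := by
    rw [hneg, mul_comm, exp_ofReal_mul_I_re, Real.cos_neg]
  have hupper := norm_integral_ray_le ht (norm_exp_I_mul_ofReal φ₀) (hre_upper ▸ hcos)
    fun r hr => hH _ (Or.inl (Or.inl ⟨r, hr, rfl⟩))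
  have hlower := norm_integral_ray_le ht (hneg ▸ norm_exp_I_mul_ofReal (-φ₀)) (hre_lower ▸ hcos)
    fun r hr => hH _ (Or.inl (Or.inr ⟨r, hr, rfl⟩))
  rw [hre_upper] at hupper
  rw [hre_lower] at hlower
  have harc := norm_integral_exp_arc_le (t := t) (ρ := 1 / t) (α := -φ₀) (β := φ₀) ht.le h1t.le
    (g := fun φ => H (((1 / t : ℝ) : ℂ) * cexp (I * φ))) fun φ hφ => by
      rw [Set.uIoc_of_le (by linarith)] at hφ
      exact hH _ (Or.inr ⟨φ, hφ.1.le, hφ.2, rfl⟩)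
  calc ‖contourInt t φ₀ H‖
      ≤ M / (t * -Real.cos φ₀) + Real.exp (t * (1 / t)) * M * (1 / t) * |φ₀ - -φ₀| +
          M / (t * -Real.cos φ₀) := by
        rw [contourInt]
        refine norm_add₃_le.trans ?_
        rw [norm_neg]
        gcongr
    _ = M / t * (2 / -Real.cos φ₀ + 2 * φ₀ * Real.exp 1) := by
        rw [mul_one_div_cancel ht.ne', sub_neg_eq_add, abs_of_nonneg (by linarith)]
        field_simp
        ring

theorem add_one_div_rpow_neg_sub_one_div {a t : ℝ} (ha : 0 ≤ a) (ht : 0 < t) (k : ℕ) :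
    (a + 1 / t) ^ (-(k : ℝ) - 1) / t = t ^ k * (1 + a * t) ^ (-(k : ℝ) - 1) := by
  have hsplit : a + 1 / t = (1 + a * t) / t := by field_simp; ring
  rw [hsplit, Real.div_rpow (by positivity) ht.le, show -(k : ℝ) - 1 = -((k + 1 : ℕ) : ℝ) by
    push_cast; ring, Real.rpow_neg ht.le, Real.rpow_natCast, pow_succ]
  field_simp

/-- **Contour estimate.** If `|H(z)| ≤ C (a+|z|)^{-k-1}` on `Γ_t`, then
`|∫_{Γ_t} e^{zt} H(z) dz| ≤ C' C t^k (1+at)^{-k-1}` with `C'` depending only on `k, φ₀`. -/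
theorem statement14 (k : ℕ) (φ₀ : ℝ) (hφ₀l : Real.pi / 2 < φ₀) (hφ₀u : φ₀ < Real.pi) :
    ∃ C' : ℝ, 0 < C' ∧
      ∀ (t a C : ℝ), 0 < t → 0 < a → 0 < C →
        ∀ H : ℂ → ℂ, ContinuousOn H (contourSet t φ₀) →
          (∀ z ∈ contourSet t φ₀,
            ‖H z‖ ≤ C * (a + ‖z‖) ^ (-(k : ℝ) - 1)) →
          ‖contourInt t φ₀ H‖ ≤ C' * C * t ^ k * (1 + a * t) ^ (-(k : ℝ) - 1) := by
  have hcos : Real.cos φ₀ < 0 :=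
    Real.cos_neg_of_pi_div_two_lt_of_lt hφ₀l (by linarith [Real.pi_pos])
  have hφ₀ : 0 < φ₀ := (by positivity : 0 < Real.pi / 2).trans hφ₀l
  have hcos' : 0 < -Real.cos φ₀ := neg_pos.2 hcos
  refine ⟨2 / -Real.cos φ₀ + 2 * φ₀ * Real.exp 1, by positivity, ?_⟩
  intro t a C ht ha hC H _ hbound
  have hH : ∀ z ∈ contourSet t φ₀, ‖H z‖ ≤ C * (a + 1 / t) ^ (-(k : ℝ) - 1) := fun z hz =>
    (hbound z hz).trans <| mul_le_mul_of_nonneg_left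
      (Real.rpow_le_rpow_of_nonpos (by positivity)
        (by linarith [one_div_le_norm_of_mem_contourSet ht hz])
        (by linarith [k.cast_nonneg (α := ℝ)]))
      hC.le
  calc ‖contourInt t φ₀ H‖
      ≤ C * (a + 1 / t) ^ (-(k : ℝ) - 1) / t * (2 / -Real.cos φ₀ + 2 * φ₀ * Real.exp 1) :=
        norm_contourInt_le ht hφ₀.le hcos hH
    _ = _ := by rw [mul_div_assoc, add_one_div_rpow_neg_sub_one_div ha.le ht]; ring
end
end
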